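/- Let k be a perfect field of characteristic p > 0 endowed with a (possibly trivial) nonarchimedean absolute value. Then the completion of k with respect to this absolute value is a perfect field. (This is the paper's lemma that the completion of the perfect closure of a nonarchimedean field of characteristic p is perfect, applied to the perfect valued field given by the perfect closure.) -/

import Mathlib

/-!
In characteristic `p` the Frobenius map of a normed field satisfies
`‖x ^ p - y ^ p‖ = ‖x - y‖ ^ p`, so it is a uniform embedding; on a complete field its range is
therefore complete, hence closed. That range contains the dense image of the perfect field `k`,
so it is everything.
-/

open Function Set

section Frobenius

variable (K : Type*) [NormedField K] (p : ℕ) [Fact p.Prime] [CharP K p]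

theorem dist_frobenius (x y : K) : dist (frobenius K p x) (frobenius K p y) = dist x y ^ p := by
  rw [dist_eq_norm, dist_eq_norm, frobenius_def, frobenius_def, ← sub_pow_char, norm_pow]

theorem isUniformInducing_frobenius : IsUniformInducing (frobenius K p) := by
  have hp : 1 ≤ p := (Fact.out : p.Prime).one_le
  refine Metric.isUniformInducing_iff.2 ⟨Metric.uniformContinuous_iff.2 fun ε hε => ?_,
    fun δ hδ => ⟨δ ^ p, by positivity, fun h => ?_⟩⟩
  · refine ⟨min 1 ε, by positivity, fun {x y} h => ?_⟩
    rw [dist_frobenius]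
    calc dist x y ^ p ≤ dist x y := pow_le_of_le_one dist_nonneg (lt_min_iff.1 h).1.le (by omega)
      _ < ε := (lt_min_iff.1 h).2
  · rw [dist_frobenius] at h
    exact lt_of_pow_lt_pow_left₀ p hδ.le h

theorem isClosed_range_frobenius [CompleteSpace K] : IsClosed (range (frobenius K p)) :=
  (isUniformInducing_frobenius K p).isComplete_range.isClosed

end Frobenius

theorem surjective_frobenius_of_denseRange {k K : Type*} [Field k] [NormedField K]
    [CompleteSpace K] (p : ℕ) [Fact p.Prime] [CharP k p] [PerfectRing k p] [CharP K p]
    (ι : k →+* K) (hdense : DenseRange ι) : Surjective (frobenius K p) := by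
  have hsub : range ι ⊆ range (frobenius K p) := by
    rintro _ ⟨x, rfl⟩
    obtain ⟨y, rfl⟩ := surjective_frobenius k p x
    exact ⟨ι y, (ι.map_frobenius p y).symm⟩
  refine range_eq_univ.1 (eq_univ_of_univ_subset ?_)
  rw [← hdense.closure_range]
  exact (isClosed_range_frobenius K p).closure_subset_iff.2 hsub

universe u

theorem completion_perfectField_general
    (p : ℕ) (hp : p.Prime)
    (k : Type u) [NormedField k] [CharP k p] [PerfectField k]
    (K : Type u) [NormedField K] [CompleteSpace K]
    (ι : k →+* K) (hdense : DenseRange ι) :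
    PerfectField K := by
  have : Fact p.Prime := ⟨hp⟩
  have : CharP K p := charP_of_injective_ringHom ι.injective p
  have : PerfectRing K p := .ofSurjective K p (surjective_frobenius_of_denseRange p ι hdense)
  exact PerfectRing.toPerfectField K p

/-- **Statement 18.** Let `k` be a perfect field of characteristic `p > 0` endowed with a
(possibly trivial) nonarchimedean absolute value. Then the completion of `k` with respect
to this absolute value is a perfect field. (The completion is formalized as any complete
nonarchimedean valued field `K` admitting an isometric embedding of `k` with dense range.) -/
theorem completion_perfectField
    (p : ℕ) (hp : p.Prime)
    (k : Type u) [NormedField k] [IsUltrametricDist k] [CharP k p] [PerfectField k]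
    (K : Type u) [NormedField K] [IsUltrametricDist K] [CompleteSpace K]
    (ι : k →+* K) (hι : Isometry ι) (hdense : DenseRange ι) :
    PerfectField K :=
  completion_perfectField_general p hp k K ι hdense
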